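/- arXiv:2204.04239 — 4 statements merged into one kernel-verified Lean document; each statement's English description precedes it below -/
import Mathlib

section
/- Let h : (0,T] → (0,∞) be increasing and satisfy C₃ (R/r)^{1/α₂} ≤ h(R)/h(r) ≤ C₄ (R/r)^{1/α₁} for all 0 < r ≤ R ≤ T, where 0 < α₁ ≤ α₂. Let a ∈ ℝ and b ≥ 0. If a − b/α₂ + 1 < 0, then there exists a constant C₂ = C₂(a,b) such that ∫_r^T s^a h(s)^{−b} ds ≤ C₂ r^{a+1} h(r)^{−b} for all r ∈ (0,T). -/
open MeasureTheory

theorem stmt2 (T : ℝ) (hT : 0 < T) (h : ℝ → ℝ)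
    (hpos : ∀ t : ℝ, 0 < t → t ≤ T → 0 < h t)
    (hmono : ∀ s t : ℝ, 0 < s → s ≤ t → t ≤ T → h s ≤ h t)
    (C₃ C₄ α₁ α₂ : ℝ) (hC₃ : 0 < C₃) (hC₄ : 0 < C₄)
    (hα₁ : 0 < α₁) (hα : α₁ ≤ α₂)
    (hscal : ∀ r R : ℝ, 0 < r → r ≤ R → R ≤ T →
      C₃ * (R / r) ^ (1 / α₂) ≤ h R / h r ∧ h R / h r ≤ C₄ * (R / r) ^ (1 / α₁))
    (a b : ℝ) (hb : 0 ≤ b) (hab : a - b / α₂ + 1 < 0) :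
    ∃ C₂ > 0, ∀ r : ℝ, 0 < r → r < T →
      (∫ s in Set.Ioo r T, s ^ a * (h s) ^ (-b)) ≤ C₂ * r ^ (a + 1) * (h r) ^ (-b) := by
  set c : ℝ := a - b / α₂ with hc
  have hc1 : c < -1 := by linarith
  have hc1' : c + 1 < 0 := by linarith
  have hncpos : 0 < -(c + 1) := by linarith
  refine ⟨C₃ ^ (-b) / (-(c + 1)),
    div_pos (Real.rpow_pos_of_pos hC₃ _) hncpos, fun r hr hrT => ?_⟩
  have hα₂ : 0 < α₂ := lt_of_lt_of_le hα₁ hα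
  have hhr : 0 < h r := hpos r hr hrT.le
  set K : ℝ := C₃ ^ (-b) * r ^ (b / α₂) * (h r) ^ (-b) with hK
  have hKpos : 0 < K := by positivity
  -- pointwise bound
  have hbound : ∀ s ∈ Set.Ioo r T, s ^ a * (h s) ^ (-b) ≤ K * s ^ c := by
    intro s hs
    obtain ⟨hrs, hsT⟩ := hs
    have hs0 : 0 < s := hr.trans hrs
    have hhs : 0 < h s := hpos s hs0 hsT.le
    have hlow := (hscal r s hr hrs.le hsT.le).1
    have hsr : (0:ℝ) < s / r := by positivity
    have hlb : h r * (C₃ * (s / r) ^ (1 / α₂)) ≤ h s := by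
      rw [le_div_iff₀ hhr] at hlow
      linarith [hlow]
    have hlbpos : 0 < h r * (C₃ * (s / r) ^ (1 / α₂)) := by positivity
    have h1 : (h s) ^ (-b) ≤ (h r * (C₃ * (s / r) ^ (1 / α₂))) ^ (-b) :=
      Real.rpow_le_rpow_of_nonpos hlbpos hlb (neg_nonpos.mpr hb)
    have h2 : (h r * (C₃ * (s / r) ^ (1 / α₂))) ^ (-b)
        = (h r) ^ (-b) * C₃ ^ (-b) * (s / r) ^ (-(b / α₂)) := by
      rw [Real.mul_rpow hhr.le (by positivity), Real.mul_rpow hC₃.le (by positivity),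
        ← Real.rpow_mul hsr.le, show 1 / α₂ * -b = -(b / α₂) from by ring]
      ring
    have h3 : (s / r) ^ (-(b / α₂)) = s ^ (-(b / α₂)) * r ^ (b / α₂) := by
      rw [Real.div_rpow hs0.le hr.le, div_eq_mul_inv, ← Real.rpow_neg hr.le, neg_neg]
    have : s ^ a * (h s) ^ (-b) ≤ s ^ a * ((h r) ^ (-b) * C₃ ^ (-b) * (s ^ (-(b / α₂)) * r ^ (b / α₂))) := by
      rw [← h3, ← h2]
      exact mul_le_mul_of_nonneg_left h1 (Real.rpow_nonneg hs0.le a)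
    refine this.trans_eq ?_
    rw [hK, hc]
    rw [show a - b / α₂ = a + -(b / α₂) from by ring, Real.rpow_add hs0]
    ring
  have hIntBound : IntegrableOn (fun s => K * s ^ c) (Set.Ioo r T) := by
    exact ((integrableOn_Ioi_rpow_of_lt hc1 hr).mono_set Set.Ioo_subset_Ioi_self).const_mul K
  by_cases hInt : IntegrableOn (fun s => s ^ a * (h s) ^ (-b)) (Set.Ioo r T)
  · have step1 : (∫ s in Set.Ioo r T, s ^ a * (h s) ^ (-b)) ≤ ∫ s in Set.Ioo r T, K * s ^ c :=
      setIntegral_mono_on hInt hIntBound measurableSet_Ioo hbound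
    have step2 : (∫ s in Set.Ioo r T, K * s ^ c) ≤ ∫ s in Set.Ioi r, K * s ^ c := by
      apply setIntegral_mono_set ((integrableOn_Ioi_rpow_of_lt hc1 hr).const_mul K)
      · filter_upwards [self_mem_ae_restrict (measurableSet_Ioi (a := r))] with s hs
        have : 0 < s := hr.trans hs
        positivity
      · exact Filter.Eventually.of_forall Set.Ioo_subset_Ioi_self
    have step3 : (∫ s in Set.Ioi r, K * s ^ c) = K * (-r ^ (c + 1) / (c + 1)) := by
      rw [integral_const_mul, integral_Ioi_rpow_of_lt hc1 hr]
    refine (step1.trans (step2.trans_eq step3)).trans_eq ?_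
    have hre : r ^ (b / α₂) * r ^ (c + 1) = r ^ (a + 1) := by
      rw [← Real.rpow_add hr]; congr 1; rw [hc]; ring
    have hdiv : -r ^ (c + 1) / (c + 1) = r ^ (c + 1) * (-(c + 1))⁻¹ := by
      rw [neg_div, ← div_neg, div_eq_mul_inv]
    rw [hK, hdiv, div_eq_mul_inv, ← hre]
    ring
  · rw [integral_undef hInt]
    exact mul_nonneg (mul_nonneg (div_pos (Real.rpow_pos_of_pos hC₃ _) hncpos).le
      (Real.rpow_nonneg hr.le _)) (Real.rpow_nonneg hhr.le _)
end

section
/- Let f : (0,∞) → (0,∞) be decreasing and suppose: (i) there exist C₅ > 0 and α₂ > 0 with f(r)/f(R) ≤ C₅ (R/r)^{d+α₂} for all 0 < r ≤ R ≤ 2; and (ii) for every R ≥ 1 there is c₀ = c₀(R) with f(r+s−R) ≤ c₀ f(r+s) whenever r + s ≥ 3R. Then for every R > 0 there exists a constant C = C(R) such that f(r) ≤ C f(r+s) for all r > 0 and 0 < s ≤ min(R, r/2). -/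
theorem stmt3 (d : ℕ) (hd : 1 ≤ d) (f : ℝ → ℝ)
    (hpos : ∀ x : ℝ, 0 < x → 0 < f x)
    (hdec : ∀ x y : ℝ, 0 < x → x ≤ y → f y ≤ f x)
    (C₅ α₂ : ℝ) (hC₅ : 0 < C₅) (hα₂ : 0 < α₂)
    (hscal : ∀ r R : ℝ, 0 < r → r ≤ R → R ≤ 2 →
      f r / f R ≤ C₅ * (R / r) ^ ((d : ℝ) + α₂))
    (hshift : ∀ R : ℝ, 1 ≤ R → ∃ c₀ > 0, ∀ r s : ℝ, 0 < r → 0 < s →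
      3 * R ≤ r + s → f (r + s - R) ≤ c₀ * f (r + s)) :
    ∀ R : ℝ, 0 < R → ∃ C > 0, ∀ r s : ℝ, 0 < r → 0 < s → s ≤ min R (r / 2) →
      f r ≤ C * f (r + s) := by
  intro R hR
  set R' : ℝ := max R 1 with hR'def
  have hR'1 : 1 ≤ R' := le_max_right _ _
  have hRR' : R ≤ R' := le_max_left _ _
  obtain ⟨c₀, hc₀pos, hc₀⟩ := hshift R' hR'1
  set C₁ : ℝ := C₅ * (3 / 2 : ℝ) ^ ((d : ℝ) + α₂) with hC₁def
  have hC₁pos : 0 < C₁ := mul_pos hC₅ (Real.rpow_pos_of_pos (by norm_num) _)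
  have h3R' : (0 : ℝ) < 3 * R' := by linarith
  have hf3R' : 0 < f (3 * R') := hpos _ h3R'
  set C₂ : ℝ := f (4 / 3) / f (3 * R') with hC₂def
  have hC₂pos : 0 < C₂ := div_pos (hpos _ (by norm_num)) hf3R'
  refine ⟨max (max C₁ C₂) c₀, lt_max_iff.mpr (Or.inr hc₀pos), ?_⟩
  intro r s hr hs hsle
  have hs2 : s ≤ r / 2 := hsle.trans (min_le_right _ _)
  have hsR : s ≤ R := hsle.trans (min_le_left _ _)
  have hrs : 0 < r + s := by linarith
  have hfrs : 0 < f (r + s) := hpos _ hrs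
  by_cases hsmall : r + s ≤ 2
  · have h := hscal r (r + s) hr (by linarith) hsmall
    have hbase : (r + s) / r ≤ 3 / 2 := by rw [div_le_iff₀ hr]; linarith
    have hpow : ((r + s) / r) ^ ((d : ℝ) + α₂) ≤ (3 / 2 : ℝ) ^ ((d : ℝ) + α₂) :=
      Real.rpow_le_rpow (by positivity) hbase (by positivity)
    have h1 : f r / f (r + s) ≤ C₁ :=
      h.trans (mul_le_mul_of_nonneg_left hpow hC₅.le)
    have h2 : f r ≤ C₁ * f (r + s) := (div_le_iff₀ hfrs).mp h1
    have h3 : C₁ ≤ max (max C₁ C₂) c₀ := (le_max_left _ _).trans (le_max_left _ _)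
    calc f r ≤ C₁ * f (r + s) := h2
      _ ≤ max (max C₁ C₂) c₀ * f (r + s) := mul_le_mul_of_nonneg_right h3 hfrs.le
  · by_cases hbig : 3 * R' ≤ r + s
    · have hx : 0 < r + s - R' := by linarith
      have h1 : f r ≤ f (r + s - R') := hdec _ _ hx (by linarith)
      have h2 : f (r + s - R') ≤ c₀ * f (r + s) := hc₀ r s hr hs hbig
      have h3 : c₀ ≤ max (max C₁ C₂) c₀ := le_max_right _ _
      calc f r ≤ c₀ * f (r + s) := h1.trans h2
        _ ≤ max (max C₁ C₂) c₀ * f (r + s) := mul_le_mul_of_nonneg_right h3 hfrs.le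
    · push_neg at hsmall hbig
      have hr43 : (4 / 3 : ℝ) ≤ r := by linarith
      have h1 : f r ≤ f (4 / 3) := hdec _ _ (by norm_num) hr43
      have h2 : f (3 * R') ≤ f (r + s) := hdec _ _ hrs hbig.le
      have h3 : f (4 / 3) = C₂ * f (3 * R') := by
        rw [hC₂def, div_mul_cancel₀ _ hf3R'.ne']
      have h4 : f r ≤ C₂ * f (r + s) := by
        calc f r ≤ f (4 / 3) := h1
          _ = C₂ * f (3 * R') := h3
          _ ≤ C₂ * f (r + s) := mul_le_mul_of_nonneg_left h2 hC₂pos.le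
      have h5 : C₂ ≤ max (max C₁ C₂) c₀ := (le_max_right _ _).trans (le_max_left _ _)
      calc f r ≤ C₂ * f (r + s) := h4
        _ ≤ max (max C₁ C₂) c₀ * f (r + s) := mul_le_mul_of_nonneg_right h5 hfrs.le
end

section
/- Let h : (0,t₀] → (0,∞) be increasing and satisfy the scaling h(R)/h(r) ≥ C₃ (R/r)^{1/α₂} for 0 < r ≤ R ≤ t₀ with α₂ < 2. Let a ∈ (1,2] and b with 1/a + 1/b = 1 (so b ≥ 2 > α₂). Let Ψ be increasing with inverse-type relation h(t) = 1/Ψ⁻(1/t). Then there exists C = C(a) such that ∫₀^t (min(r/h(t−s), 1))^b ds ≤ C / Ψ(1/r) for all t ≤ t₀ and r > 0. -/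
/-!
Substituting `u = t - s`, the integrand becomes `g u = min (r / h u) 1 ^ b`.
Put `c = 2 / Ψ (1 / r)`. On `(0, c]` we only use `g ≤ 1`. Beyond `c`, the relation
`h = 1 / Ψ⁻(1 / ·)` gives `r ≤ h c`, and the lower scaling of `h` then yields
`g u ≤ C₃⁻ᵇ (c / u) ^ (b / α₂)`; this tail is integrable at infinity because `b ≥ 2 > α₂`.
Hence the integral is at most `(1 + C₃⁻ᵇ / (b / α₂ - 1)) c`.
-/

open MeasureTheory Set

lemma two_le_of_one_div_add_one_div_eq_one {a b : ℝ} (ha : 1 < a) (ha2 : a ≤ 2)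
    (hb : 1 / a + 1 / b = 1) : 2 ≤ b := by
  have h1a : 1 / a < 1 := (div_lt_one (by linarith)).2 ha
  have h2a : 1 / 2 ≤ 1 / a := one_div_le_one_div_of_le (by linarith) ha2
  have hb0 : 0 < b := one_div_pos.1 (by linarith)
  exact (one_div_le_one_div hb0 two_pos).1 (by linarith)

lemma le_one_div_rightInv_of_lt {Ψ Ψinv : ℝ → ℝ} (hΨ : MonotoneOn Ψ (Ioi 0))
    (hΨΨinv : ∀ s : ℝ, 0 < s → Ψ (Ψinv s) = s) {r s : ℝ} (hr : 0 < r) (hs : 0 < s)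
    (hΨs : 0 < Ψinv s) (hsr : s < Ψ (1 / r)) : r ≤ 1 / Ψinv s := by
  refine (le_one_div hr hΨs).2 ?_
  by_contra! hlt
  have := hΨ (one_div_pos.2 hr) hΨs hlt.le
  rw [hΨΨinv s hs] at this
  linarith

lemma rpow_min_div_one_le_of_scaling {h : ℝ → ℝ} {C α b r c u : ℝ} (hC : 0 < C) (hb : 0 ≤ b)
    (hr : 0 < r) (hc : 0 < c) (hu : 0 < u) (hhu : 0 < h u) (hrc : r ≤ h c)
    (hscal : C * (u / c) ^ (1 / α) ≤ h u / h c) :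
    min (r / h u) 1 ^ b ≤ C⁻¹ ^ b * (c / u) ^ (b / α) := by
  have hpos : 0 < C * (u / c) ^ (1 / α) := by positivity
  have hbase : min (r / h u) 1 ≤ C⁻¹ * (c / u) ^ (1 / α) :=
    calc min (r / h u) 1 ≤ r / h u := min_le_left _ _
      _ ≤ h c / h u := div_le_div_of_nonneg_right hrc hhu.le
      _ ≤ (C * (u / c) ^ (1 / α))⁻¹ := by simpa only [inv_div] using inv_anti₀ hpos hscal
      _ = C⁻¹ * (c / u) ^ (1 / α) := by
        rw [mul_inv, ← Real.inv_rpow (by positivity), inv_div]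
  calc min (r / h u) 1 ^ b ≤ (C⁻¹ * (c / u) ^ (1 / α)) ^ b :=
        Real.rpow_le_rpow (le_min (by positivity) zero_le_one) hbase hb
    _ = C⁻¹ ^ b * (c / u) ^ (b / α) := by
        rw [Real.mul_rpow (by positivity) (by positivity), ← Real.rpow_mul (by positivity),
          one_div_mul_eq_div]

lemma setIntegral_Ioo_comp_sub_left (f : ℝ → ℝ) {t : ℝ} (ht : 0 ≤ t) :
    ∫ s in Ioo 0 t, f (t - s) = ∫ u in Ioo 0 t, f u := by
  simp only [← integral_Ioc_eq_integral_Ioo, ← intervalIntegral.integral_of_le ht,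
    intervalIntegral.integral_comp_sub_left f t, sub_self, sub_zero]

noncomputable def powerTailMajorant (c K p : ℝ) (u : ℝ) : ℝ :=
  (Ioc 0 c).indicator 1 u + (Ioi c).indicator (fun v => K * (c / v) ^ p) u

section powerTailMajorant

variable {c K p : ℝ}

lemma powerTailMajorant_nonneg (hc : 0 < c) (hK : 0 ≤ K) (u : ℝ) :
    0 ≤ powerTailMajorant c K p u := by
  refine add_nonneg (indicator_nonneg (fun _ _ => zero_le_one) u)
    (indicator_nonneg (fun v hv => ?_) u)
  have : 0 < v := hc.trans hv
  positivity

lemma eqOn_power_tail (hc : 0 < c) :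
    EqOn (fun v => K * (c / v) ^ p) (fun v => K * c ^ p * v ^ (-p)) (Ioi c) := by
  intro v (hv : c < v)
  have : 0 < v := hc.trans hv
  dsimp only
  rw [Real.div_rpow hc.le this.le, Real.rpow_neg this.le, mul_assoc, div_eq_mul_inv]

lemma integrableOn_Ioi_power_tail (hc : 0 < c) (hp : 1 < p) :
    IntegrableOn (fun v => K * (c / v) ^ p) (Ioi c) :=
  IntegrableOn.congr_fun ((integrableOn_Ioi_rpow_of_lt (a := -p) (by linarith) hc).const_mul _)
    (eqOn_power_tail hc).symm measurableSet_Ioi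

lemma integral_Ioi_power_tail (hc : 0 < c) (hp : 1 < p) :
    ∫ v in Ioi c, K * (c / v) ^ p = K * c / (p - 1) := by
  have hp' : p - 1 ≠ 0 := by linarith
  rw [setIntegral_congr_fun measurableSet_Ioi (eqOn_power_tail hc), integral_const_mul,
    integral_Ioi_rpow_of_lt (by linarith) hc, Real.rpow_add hc, Real.rpow_neg hc.le,
    Real.rpow_one, show -p + 1 = -(p - 1) by ring, neg_div_neg_eq]
  have : c ^ p ≠ 0 := (Real.rpow_pos_of_pos hc p).ne'
  field_simp

lemma integrable_indicator_Ioc_one : Integrable ((Ioc 0 c).indicator (1 : ℝ → ℝ)) :=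
  (integrable_indicator_iff measurableSet_Ioc).2 (integrableOn_const measure_Ioc_lt_top.ne)

lemma integrable_indicator_Ioi_power_tail (hc : 0 < c) (hp : 1 < p) :
    Integrable ((Ioi c).indicator fun v => K * (c / v) ^ p) :=
  (integrable_indicator_iff measurableSet_Ioi).2 (integrableOn_Ioi_power_tail hc hp)

lemma integrable_powerTailMajorant (hc : 0 < c) (hp : 1 < p) :
    Integrable (powerTailMajorant c K p) :=
  integrable_indicator_Ioc_one.add (integrable_indicator_Ioi_power_tail hc hp)

lemma integral_powerTailMajorant (hc : 0 < c) (hp : 1 < p) :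
    ∫ u, powerTailMajorant c K p u = (1 + K / (p - 1)) * c := by
  have hp' : p - 1 ≠ 0 := by linarith
  unfold powerTailMajorant
  rw [integral_add integrable_indicator_Ioc_one (integrable_indicator_Ioi_power_tail hc hp),
    integral_indicator measurableSet_Ioc, integral_indicator measurableSet_Ioi,
    integral_Ioi_power_tail hc hp]
  simp only [Pi.one_apply, setIntegral_const, Real.volume_real_Ioc_of_le hc.le, smul_eq_mul]
  field_simp
  ring

lemma rpow_min_div_one_le_powerTailMajorant {h : ℝ → ℝ} {t₀ C α b r u : ℝ} (hC : 0 < C)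
    (hb : 0 ≤ b) (hr : 0 < r) (hc : 0 < c) (hu : 0 < u) (hut₀ : u ≤ t₀) (hhu : 0 < h u)
    (hrc : c < u → r ≤ h c)
    (hscal : ∀ r R : ℝ, 0 < r → r ≤ R → R ≤ t₀ → C * (R / r) ^ (1 / α) ≤ h R / h r) :
    min (r / h u) 1 ^ b ≤ powerTailMajorant c (C⁻¹ ^ b) (b / α) u := by
  have hmin : 0 ≤ min (r / h u) 1 := le_min (by positivity) zero_le_one
  rcases le_or_gt u c with huc | hcu
  · rw [powerTailMajorant, indicator_of_mem (s := Ioc 0 c) ⟨hu, huc⟩,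
      indicator_of_notMem (s := Ioi c) (not_lt.2 huc), Pi.one_apply, add_zero]
    exact Real.rpow_le_one hmin (min_le_right _ _) hb
  · rw [powerTailMajorant, indicator_of_notMem (s := Ioc 0 c) (fun h => not_le.2 hcu h.2),
      indicator_of_mem (s := Ioi c) hcu, zero_add]
    exact rpow_min_div_one_le_of_scaling hC hb hr hc hu hhu (hrc hcu)
      (hscal c u hc hcu.le hut₀)

end powerTailMajorant

theorem stmt7_general (t₀ : ℝ) (h Ψ Ψinv : ℝ → ℝ)
    (hhpos : ∀ t : ℝ, 0 < t → t ≤ t₀ → 0 < h t)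
    (C₃ α₂ : ℝ) (hC₃ : 0 < C₃) (hα₂ : 0 < α₂) (hα₂2 : α₂ < 2)
    (hscal : ∀ r R : ℝ, 0 < r → r ≤ R → R ≤ t₀ →
      C₃ * (R / r) ^ (1 / α₂) ≤ h R / h r)
    (hΨpos : ∀ u : ℝ, 0 < u → 0 < Ψ u)
    (hΨmono : ∀ u v : ℝ, 0 < u → u ≤ v → Ψ u ≤ Ψ v)
    (hΨΨinv : ∀ s : ℝ, 0 < s → Ψ (Ψinv s) = s)
    (hhdef : ∀ t : ℝ, 0 < t → h t = 1 / Ψinv (1 / t))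
    (a b : ℝ) (ha : 1 < a) (ha2 : a ≤ 2) (hb : 1 / a + 1 / b = 1) :
    ∃ C > 0, ∀ t r : ℝ, 0 < t → t ≤ t₀ → 0 < r →
      (∫ s in Set.Ioo (0:ℝ) t, (min (r / h (t - s)) 1) ^ b) ≤ C / Ψ (1 / r) := by
  have hb2 : 2 ≤ b := two_le_of_one_div_add_one_div_eq_one ha ha2 hb
  have hb0 : 0 ≤ b := by linarith
  set p := b / α₂
  set K := C₃⁻¹ ^ b
  have hp : 1 < p := (one_lt_div hα₂).2 (by linarith)
  have hK : 0 < K := by positivity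
  refine ⟨2 * (1 + K / (p - 1)), by have := sub_pos.2 hp; positivity, ?_⟩
  intro t r ht htt₀ hr
  set g : ℝ → ℝ := fun u => min (r / h u) 1 ^ b
  have hΨr : 0 < Ψ (1 / r) := hΨpos (1 / r) (by positivity)
  set c := 2 / Ψ (1 / r)
  have hc : 0 < c := by positivity
  have hrc (hcu : c < t) : r ≤ h c := by
    have hhc := hhpos c hc (by linarith)
    rw [hhdef c hc] at hhc ⊢
    exact le_one_div_rightInv_of_lt (fun u hu v _ huv => hΨmono u v hu huv) hΨΨinv hr
      (by positivity) (one_div_pos.1 hhc) (by rw [one_div_div]; linarith)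
  have hg (u : ℝ) (hu : u ∈ Ioo 0 t) : 0 ≤ g u ∧ g u ≤ powerTailMajorant c K p u := by
    have hhu : 0 < h u := hhpos u hu.1 (hu.2.le.trans htt₀)
    exact ⟨Real.rpow_nonneg (le_min (by positivity) zero_le_one) b,
      rpow_min_div_one_le_powerTailMajorant hC₃ hb0 hr hc hu.1 (hu.2.le.trans htt₀) hhu
        (fun hcu => hrc (hcu.trans hu.2)) hscal⟩
  have hmaj := integrable_powerTailMajorant (K := K) hc hp
  calc ∫ s in Ioo 0 t, g (t - s) = ∫ u in Ioo 0 t, g u := setIntegral_Ioo_comp_sub_left g ht.le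
    -- no measurability of `g` is needed: a non-integrable `g` has integral `0`
    _ ≤ ∫ u in Ioo 0 t, powerTailMajorant c K p u :=
        integral_mono_of_nonneg
          (ae_restrict_of_forall_mem measurableSet_Ioo fun u hu => (hg u hu).1)
          hmaj.integrableOn (ae_restrict_of_forall_mem measurableSet_Ioo fun u hu => (hg u hu).2)
    _ ≤ ∫ u, powerTailMajorant c K p u :=
        setIntegral_le_integral hmaj (.of_forall (powerTailMajorant_nonneg hc hK.le))
    _ = 2 * (1 + K / (p - 1)) / Ψ (1 / r) := by
        rw [integral_powerTailMajorant hc hp]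
        ring

theorem stmt7 (t₀ : ℝ) (ht₀ : 0 < t₀) (h Ψ Ψinv : ℝ → ℝ)
    (hhpos : ∀ t : ℝ, 0 < t → t ≤ t₀ → 0 < h t)
    (hhmono : ∀ s t : ℝ, 0 < s → s ≤ t → t ≤ t₀ → h s ≤ h t)
    (C₃ α₂ : ℝ) (hC₃ : 0 < C₃) (hα₂ : 0 < α₂) (hα₂2 : α₂ < 2)
    (hscal : ∀ r R : ℝ, 0 < r → r ≤ R → R ≤ t₀ →
      C₃ * (R / r) ^ (1 / α₂) ≤ h R / h r)
    (hΨpos : ∀ u : ℝ, 0 < u → 0 < Ψ u)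
    (hΨmono : ∀ u v : ℝ, 0 < u → u ≤ v → Ψ u ≤ Ψ v)
    (hΨinvpos : ∀ s : ℝ, 0 < s → 0 < Ψinv s)
    (hΨΨinv : ∀ s : ℝ, 0 < s → Ψ (Ψinv s) = s)
    (hΨinvΨ : ∀ s : ℝ, 0 < s → s ≤ Ψinv (Ψ s))
    (hhdef : ∀ t : ℝ, 0 < t → h t = 1 / Ψinv (1 / t))
    (a b : ℝ) (ha : 1 < a) (ha2 : a ≤ 2) (hb : 1 / a + 1 / b = 1) :
    ∃ C > 0, ∀ t r : ℝ, 0 < t → t ≤ t₀ → 0 < r →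
      (∫ s in Set.Ioo (0:ℝ) t, (min (r / h (t - s)) 1) ^ b) ≤ C / Ψ (1 / r) :=
  stmt7_general t₀ h Ψ Ψinv hhpos C₃ α₂ hC₃ hα₂ hα₂2 hscal hΨpos hΨmono hΨΨinv hhdef a b ha ha2 hb
end

section
/- Let p(t,x) ≍ min(h(t)^{−d}, t f(|x|)) on (0,t₀] × ℝ^d with h increasing satisfying h(2t) ≤ c h(t) (doubling up to t₀) and f decreasing satisfying: f((|x|+|y|)/2) ≤ c' f(|x+y|) for |x|,|y| ≤ 2 (local scaling), and the ratio condition f(r+κ)/f(r) ≤ C₆ f(s+κ)/f(s) for all s > r > 0, κ > 0 (condition (C)), together with the local comparability f(r) ≤ C f(r+s) for 0 < s ≤ min(h(t₀), r/2). For a > 0 set g_a(t,x) = a^d p(t, a x). Then for all 0 < a < b there exists C = C(a,b) such that g_b(t,x) g_a(s,y) ≤ C (max(g_{b−a}(t,x), g_a(s,y))) · g_a(t+s, x+y) for all t, s > 0 with t + s ≤ t₀ and x, y ∈ ℝ^d. -/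
set_option maxHeartbeats 1000000

theorem stmt14 (d : ℕ) (hd : 1 ≤ d) (t₀ : ℝ) (ht₀ : 0 < t₀)
    (p : ℝ → EuclideanSpace ℝ (Fin d) → ℝ) (h f : ℝ → ℝ)
    (hhpos : ∀ t : ℝ, 0 < t → t ≤ t₀ → 0 < h t)
    (hhmono : ∀ s t : ℝ, 0 < s → s ≤ t → t ≤ t₀ → h s ≤ h t)
    (c₀ : ℝ) (hc₀ : 0 < c₀)
    (hdbl : ∀ t : ℝ, 0 < t → t ≤ t₀ → c₀ * h t ≤ h (t / 2))
    (hfpos : ∀ x : ℝ, 0 < x → 0 < f x)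
    (hfdec : ∀ x y : ℝ, 0 < x → x ≤ y → f y ≤ f x)
    (C₅ C₆ : ℝ) (hC₅ : 0 < C₅) (hC₆ : 0 < C₆)
    (hp : ∀ (t : ℝ) (x : EuclideanSpace ℝ (Fin d)), 0 < t → t ≤ t₀ →
      C₅ * min ((h t) ^ (-(d : ℝ))) (t * f ‖x‖) ≤ p t x ∧
      p t x ≤ C₆ * min ((h t) ^ (-(d : ℝ))) (t * f ‖x‖))
    (c' : ℝ) (hc' : 0 < c')
    (hflocal : ∀ x y : EuclideanSpace ℝ (Fin d), ‖x‖ ≤ 2 → ‖y‖ ≤ 2 →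
      f ((‖x‖ + ‖y‖) / 2) ≤ c' * f ‖x + y‖)
    (C₆' : ℝ) (hC₆' : 0 < C₆')
    (hCond : ∀ r s κ : ℝ, 0 < r → r < s → 0 < κ →
      f (r + κ) / f r ≤ C₆' * (f (s + κ) / f s))
    (Cl : ℝ) (hCl : 0 < Cl)
    (hloc : ∀ r s : ℝ, 0 < r → 0 < s → s ≤ min (h t₀) (r / 2) →
      f r ≤ Cl * f (r + s)) :
    ∀ a b : ℝ, 0 < a → a < b → ∃ C > 0,
      ∀ (t s : ℝ) (x y : EuclideanSpace ℝ (Fin d)), 0 < t → 0 < s → t + s ≤ t₀ →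
        (b ^ (d : ℝ) * p t (b • x)) * (a ^ (d : ℝ) * p s (a • y)) ≤
          C * max ((b - a) ^ (d : ℝ) * p t ((b - a) • x)) (a ^ (d : ℝ) * p s (a • y)) *
            (a ^ (d : ℝ) * p (t + s) (a • (x + y))) := by
  intro a b ha hab
  have hba : (0:ℝ) < b - a := sub_pos.mpr hab
  have hb : 0 < b := ha.trans hab
  have hndd : -(d:ℝ) ≤ 0 := by
    simp only [neg_nonpos]; exact_mod_cast Nat.zero_le d
  set r₀ : ℝ := h t₀ with hr₀def
  have hr₀ : 0 < r₀ := hhpos t₀ ht₀ le_rfl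
  -- the unit vector
  have hdpos : 0 < d := hd
  set e : EuclideanSpace ℝ (Fin d) := EuclideanSpace.single ⟨0, hdpos⟩ (1:ℝ) with hedef
  have hne : ‖e‖ = 1 := by
    rw [hedef, EuclideanSpace.norm_single]; norm_num
  -- positivity of f at 0
  have hf2 : ∀ q : ℝ, 0 < q → q ≤ 2 → f q ≤ c' * f 0 := by
    intro q hq hq2
    have h1 := hflocal (q • e) (-(q • e)) ?_ ?_
    · simpa [norm_smul, hne, abs_of_pos hq, add_neg_cancel] using h1
    · rw [norm_smul, hne, Real.norm_eq_abs, abs_of_pos hq]; simpa using hq2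
    · rw [norm_neg, norm_smul, hne, Real.norm_eq_abs, abs_of_pos hq]; simpa using hq2
  have hf0 : 0 < f 0 := by
    have h1 : f 1 ≤ c' * f 0 := hf2 1 one_pos (by norm_num)
    have h2 : 0 < f 1 := hfpos 1 one_pos
    nlinarith
  have hfub : ∀ q : ℝ, 0 ≤ q → 0 < f q := by
    intro q hq
    rcases hq.eq_or_lt with h1 | h1
    · rwa [← h1]
    · exact hfpos q h1
  -- up-to-constant monotonicity including 0
  set c₁ : ℝ := max c' 1 with hc₁def
  have hc₁1 : 1 ≤ c₁ := le_max_right _ _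
  have hc₁0 : 0 < c₁ := lt_of_lt_of_le one_pos hc₁1
  have hfmono0 : ∀ q r : ℝ, 0 ≤ q → q ≤ r → f r ≤ c₁ * f q := by
    intro q r hq hqr
    rcases hq.eq_or_lt with h1 | h1
    · -- q = 0
      rw [← h1]
      rcases (hq.trans hqr).eq_or_lt with h2 | h2
      · rw [← h2]
        nlinarith [hf0]
      · have hcc : c' ≤ c₁ := le_max_left _ _
        rcases le_total r 2 with h3 | h3
        · have := hf2 r h2 h3
          nlinarith [hf0]
        · have h4 : f r ≤ f 2 := hfdec 2 r two_pos h3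
          have h5 : f 2 ≤ c' * f 0 := hf2 2 two_pos le_rfl
          nlinarith [hf0]
    · have := hfdec q r h1 hqr
      nlinarith [hfub q hq]
  -- Cl ≥ 1
  have hCl1 : 1 ≤ Cl := by
    have h1 : f (2 * r₀) ≤ Cl * f (2 * r₀ + r₀) := by
      apply hloc (2 * r₀) r₀ (by linarith) hr₀
      exact le_min le_rfl (by linarith)
    have h2 : f (2 * r₀ + r₀) ≤ f (2 * r₀) := hfdec (2 * r₀) (2 * r₀ + r₀) (by linarith) (by linarith)
    have h3 : 0 < f (2 * r₀ + r₀) := hfpos _ (by linarith)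
    nlinarith
  -- iterated local comparability
  have Fshift : ∀ n : ℕ, ∀ r δ : ℝ, 0 < r → 0 < δ → δ ≤ r₀ → δ ≤ r / 2 →
      f r ≤ Cl ^ n * f (r + n * δ) := by
    intro n
    induction n with
    | zero => intro r δ hr _ _ _; simp
    | succ n ih =>
      intro r δ hr hδ h1 h2
      have h3 := ih r δ hr hδ h1 h2
      have h4 : f (r + n * δ) ≤ Cl * f (r + n * δ + δ) := by
        apply hloc (r + n * δ) δ (by positivity) hδ
        refine le_min h1 ?_
        have : (0:ℝ) ≤ n * δ := by positivity
        linarith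
      have h5 : (0:ℝ) ≤ Cl ^ n := by positivity
      calc f r ≤ Cl ^ n * f (r + n * δ) := h3
        _ ≤ Cl ^ n * (Cl * f (r + n * δ + δ)) := by
            exact mul_le_mul_of_nonneg_left h4 h5
        _ = Cl ^ (n + 1) * f (r + (n + 1 : ℕ) * δ) := by push_cast; ring_nf
  have Fshift' : ∀ n : ℕ, ∀ r σ : ℝ, 0 < r → 0 ≤ σ → σ ≤ n * r₀ → σ ≤ n * (r / 2) →
      f r ≤ Cl ^ n * f (r + σ) := by
    intro n r σ hr hσ h1 h2
    rcases hσ.eq_or_lt with h3 | h3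
    · rw [← h3, add_zero]
      have h4 : (1:ℝ) ≤ Cl ^ n := one_le_pow₀ hCl1
      calc f r = 1 * f r := (one_mul _).symm
        _ ≤ Cl ^ n * f r := mul_le_mul_of_nonneg_right h4 (hfub r hr.le).le
    · have hn : 0 < n := by
        rcases Nat.eq_zero_or_pos n with h4 | h4
        · exfalso; rw [h4] at h1; simp at h1; linarith
        · exact h4
      have hnR : (0:ℝ) < n := by exact_mod_cast hn
      have h5 := Fshift n r (σ / n) hr (by positivity) (by rw [div_le_iff₀ hnR]; linarith) (by rw [div_le_iff₀ hnR]; nlinarith)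
      rwa [mul_div_cancel₀ _ (ne_of_gt hnR)] at h5
  -- number of iteration steps
  set N : ℕ := ⌈(2*a)/(b-a)⌉₊ + 2 with hNdef
  have hN2 : 2*a ≤ (N:ℝ)*(b-a) := by
    have h1 : (2*a)/(b-a) ≤ (N:ℝ) := by
      have h2 := Nat.le_ceil ((2*a)/(b-a))
      have h3 : (⌈(2*a)/(b-a)⌉₊ : ℝ) ≤ (N:ℝ) := by
        rw [hNdef]; push_cast; linarith
      linarith
    calc 2*a = ((2*a)/(b-a))*(b-a) := by field_simp
      _ ≤ (N:ℝ)*(b-a) := by nlinarith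
  have hNpos : (0:ℝ) < (N:ℝ) := by
    have : 2 ≤ N := by omega
    have : (2:ℝ) ≤ (N:ℝ) := by exact_mod_cast this
    linarith
  -- beta
  set β : ℝ := r₀ ^ (-(d:ℝ)) / t₀ with hβdef
  have hβ : 0 < β := div_pos (Real.rpow_pos_of_pos hr₀ _) ht₀
  -- the constant Cs for the hard regime
  obtain ⟨Cs, hCs0, hCstar⟩ : ∃ Cs, 0 < Cs ∧ ∀ u' : ℝ, 0 < u' → (N:ℝ) * r₀ < a * u' →
      β < f ((b-a)*u') → f ((b-a)*u') ≤ Cs * f (b*u') := by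
    have hρ₀ : 0 < (b-a) * ((N:ℝ)*r₀/a) := mul_pos hba (div_pos (mul_pos hNpos hr₀) ha)
    set ρ₀ := (b-a) * ((N:ℝ)*r₀/a) with hρdef
    have hfρ : 0 < f ρ₀ := hfpos _ hρ₀
    have key : ∀ u' : ℝ, 0 < u' → (N:ℝ)*r₀ < a*u' → f ((b-a)*u') ≤ f ρ₀ := by
      intro u' hu' hlt
      apply hfdec ρ₀ _ hρ₀
      rw [hρdef]
      have h1 : (N:ℝ)*r₀/a ≤ u' := by
        rw [div_le_iff₀ ha]; nlinarith
      nlinarith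
    by_cases hGA : ∀ q : ℝ, 0 < q → β ≤ f q
    · refine ⟨f ρ₀ / β, div_pos hfρ hβ, ?_⟩
      intro u' hu' h1 h2
      have h3 := key u' hu' h1
      have h4 : β ≤ f (b*u') := hGA _ (mul_pos hb hu')
      rw [div_mul_eq_mul_div, le_div_iff₀ hβ]
      exact mul_le_mul h3 h4 hβ.le hfρ.le
    · push_neg at hGA
      obtain ⟨q₀, hq₀, hq₀β⟩ := hGA
      have hγ : 0 < f (b*q₀/(b-a)) := hfpos _ (div_pos (mul_pos hb hq₀) hba)
      refine ⟨f ρ₀ / f (b*q₀/(b-a)), div_pos hfρ hγ, ?_⟩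
      intro u' hu' h1 h2
      have h3 := key u' hu' h1
      have h4 : (b-a)*u' < q₀ := by
        by_contra h5
        push_neg at h5
        exact absurd (hfdec q₀ ((b-a)*u') hq₀ h5) (by linarith)
      have h6 : f (b*q₀/(b-a)) ≤ f (b*u') := by
        apply hfdec (b*u') _ (mul_pos hb hu')
        rw [le_div_iff₀ hba]
        nlinarith
      rw [div_mul_eq_mul_div, le_div_iff₀ hγ]
      exact mul_le_mul h3 h6 hγ.le hfρ.le
  -- global constants
  set C₂ : ℝ := 1 + Cl^N + C₆' + C₆'*Cs with hC₂def
  have hClN0 : (0:ℝ) < Cl ^ N := pow_pos hCl N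
  have hC₂0 : 0 < C₂ := by nlinarith [mul_pos hC₆' hCs0]
  have hC₂1 : 1 ≤ C₂ := by nlinarith
  have hC₂Cl : Cl ^ N ≤ C₂ := by nlinarith
  have hC₂C6 : C₆' ≤ C₂ := by nlinarith
  have hC₂CsC6 : C₆'*Cs ≤ C₂ := by nlinarith
  set κ₀ : ℝ := c₀ ^ (-(d:ℝ)) with hκ₀def
  have hκ₀0 : 0 < κ₀ := Real.rpow_pos_of_pos hc₀ _
  set Ccore : ℝ := max κ₀ (c₁ * C₂) with hCcoredef
  have hCcore0 : 0 < Ccore := lt_of_lt_of_le hκ₀0 (le_max_left _ _)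
  have hCcoreκ : κ₀ ≤ Ccore := le_max_left _ _
  have hCcorec₁ : c₁ * C₂ ≤ Ccore := le_max_right _ _
  set m₁ : ℝ := min ((b-a) ^ (d:ℝ)) (a ^ (d:ℝ)) with hm₁def
  have hm₁0 : 0 < m₁ := lt_min (Real.rpow_pos_of_pos hba _) (Real.rpow_pos_of_pos ha _)
  have hm₁l : m₁ ≤ (b-a) ^ (d:ℝ) := min_le_left _ _
  have hm₁r : m₁ ≤ a ^ (d:ℝ) := min_le_right _ _
  have hbd0 : (0:ℝ) < b ^ (d:ℝ) := Real.rpow_pos_of_pos hb _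
  have had0 : (0:ℝ) < a ^ (d:ℝ) := Real.rpow_pos_of_pos ha _
  have hbad0 : (0:ℝ) < (b-a) ^ (d:ℝ) := Real.rpow_pos_of_pos hba _
  refine ⟨b ^ (d:ℝ) * C₆^2 * Ccore / (C₅^2 * m₁),
    div_pos (mul_pos (mul_pos hbd0 (pow_pos hC₆ 2)) hCcore0)
      (mul_pos (pow_pos hC₅ 2) hm₁0), ?_⟩
  intro t s x y ht hs hts
  have hts0 : 0 < t + s := by linarith
  have htt₀ : t ≤ t₀ := by linarith
  have hst₀ : s ≤ t₀ := by linarith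
  obtain ⟨hp1l, hp1u⟩ := hp t (b • x) ht htt₀
  obtain ⟨hp2l, hp2u⟩ := hp s (a • y) hs hst₀
  obtain ⟨hp3l, hp3u⟩ := hp t ((b-a) • x) ht htt₀
  obtain ⟨hp4l, hp4u⟩ := hp (t+s) (a • (x+y)) hts0 hts
  have hbx : ‖b • x‖ = b * ‖x‖ := by
    rw [norm_smul, Real.norm_eq_abs, abs_of_pos hb]
  have hay : ‖a • y‖ = a * ‖y‖ := by
    rw [norm_smul, Real.norm_eq_abs, abs_of_pos ha]
  have hbax : ‖(b-a) • x‖ = (b-a) * ‖x‖ := by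
    rw [norm_smul, Real.norm_eq_abs, abs_of_pos hba]
  have haxy : ‖a • (x+y)‖ = a * ‖x+y‖ := by
    rw [norm_smul, Real.norm_eq_abs, abs_of_pos ha]
  rw [hbx] at hp1l hp1u
  rw [hay] at hp2l hp2u
  rw [hbax] at hp3l hp3u
  rw [haxy] at hp4l hp4u
  set u : ℝ := ‖x‖ with hudef
  set v : ℝ := ‖y‖ with hvdef
  set w : ℝ := ‖x+y‖ with hwdef
  have hu0 : 0 ≤ u := norm_nonneg x
  have hv0 : 0 ≤ v := norm_nonneg y
  have hw0 : 0 ≤ w := norm_nonneg (x+y)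
  have hwuv : w ≤ u + v := norm_add_le x y
  set A : ℝ := h t ^ (-(d:ℝ)) with hAdef
  set B : ℝ := h s ^ (-(d:ℝ)) with hBdef
  set Z₁ : ℝ := h (t+s) ^ (-(d:ℝ)) with hZ₁def
  have hA0 : 0 < A := Real.rpow_pos_of_pos (hhpos t ht htt₀) _
  have hB0 : 0 < B := Real.rpow_pos_of_pos (hhpos s hs hst₀) _
  have hZ₁0 : 0 < Z₁ := Real.rpow_pos_of_pos (hhpos _ hts0 hts) _
  have hfbu : 0 < f (b*u) := hfub _ (mul_nonneg hb.le hu0)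
  have hfbau : 0 < f ((b-a)*u) := hfub _ (mul_nonneg hba.le hu0)
  have hfav : 0 < f (a*v) := hfub _ (mul_nonneg ha.le hv0)
  have hfaw : 0 < f (a*w) := hfub _ (mul_nonneg ha.le hw0)
  have hfauv : 0 < f (a*(u+v)) := hfub _ (mul_nonneg ha.le (by linarith))
  set P : ℝ := min A (t * f (b*u)) with hPdef
  set Q : ℝ := min B (s * f (a*v)) with hQdef
  set X : ℝ := min A (t * f ((b-a)*u)) with hXdef
  set Z₂ : ℝ := (t+s) * f (a*w) with hZ₂def
  set Z : ℝ := min Z₁ Z₂ with hZdef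
  have hP0 : 0 < P := lt_min hA0 (mul_pos ht hfbu)
  have hQ0 : 0 < Q := lt_min hB0 (mul_pos hs hfav)
  have hX0 : 0 < X := lt_min hA0 (mul_pos ht hfbau)
  have hZ₂0 : 0 < Z₂ := mul_pos hts0 hfaw
  have hZ0 : 0 < Z := lt_min hZ₁0 hZ₂0
  have hPA : P ≤ A := min_le_left _ _
  have hQB : Q ≤ B := min_le_left _ _
  have hPle : P ≤ t * f (b*u) := min_le_right _ _
  have hQle : Q ≤ s * f (a*v) := min_le_right _ _
  have hXle : X ≤ t * f ((b-a)*u) := min_le_right _ _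
  clear_value u v w A B Z₁ P Q X Z₂ Z
  have hmax0 : (0:ℝ) ≤ max X Q := le_trans hQ0.le (le_max_right X Q)
  have hPX : P ≤ X := by
    rcases hu0.eq_or_lt with h1 | h1
    · rw [hPdef, hXdef, ← h1, mul_zero, mul_zero]
    · rw [hPdef, hXdef]
      refine min_le_min le_rfl (mul_le_mul_of_nonneg_left ?_ ht.le)
      exact hfdec ((b-a)*u) (b*u) (mul_pos hba h1) (by linarith only [mul_pos ha h1])
  -- Core part 1 : the Z₂-type bound (with a*(u+v))
  have Core2 : P * Q ≤ C₂ * (max X Q * ((t+s) * f (a*(u+v)))) := by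
    have hbr0 : (0:ℝ) ≤ max X Q * ((t+s) * f (a*(u+v))) :=
      mul_nonneg hmax0 (mul_nonneg hts0.le hfauv.le)
    have step : ∀ c : ℝ, c ≤ C₂ → P*Q ≤ c * (max X Q * ((t+s) * f (a*(u+v)))) →
        P*Q ≤ C₂ * (max X Q * ((t+s) * f (a*(u+v)))) := by
      intro c hc hle
      exact hle.trans (mul_le_mul_of_nonneg_right hc hbr0)
    have viaP : ∀ c : ℝ, 0 < c → P ≤ c * ((t+s) * f (a*(u+v))) →
        P*Q ≤ c * (max X Q * ((t+s) * f (a*(u+v)))) := by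
      intro c hc hle
      calc P*Q = Q*P := by ring
        _ ≤ max X Q * (c * ((t+s) * f (a*(u+v)))) :=
            mul_le_mul (le_max_right X Q) hle hP0.le hmax0
        _ = c * (max X Q * ((t+s) * f (a*(u+v)))) := by ring
    have viaQ : ∀ c : ℝ, 0 < c → Q ≤ c * ((t+s) * f (a*(u+v))) →
        P*Q ≤ c * (max X Q * ((t+s) * f (a*(u+v)))) := by
      intro c hc hle
      calc P*Q ≤ max X Q * Q :=
            mul_le_mul_of_nonneg_right (hPX.trans (le_max_left X Q)) hQ0.le
        _ ≤ max X Q * (c * ((t+s) * f (a*(u+v)))) := mul_le_mul_of_nonneg_left hle hmax0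
        _ = c * (max X Q * ((t+s) * f (a*(u+v)))) := by ring
    rcases hu0.eq_or_lt with hu | hu
    · -- u = 0
      apply step 1 hC₂1
      apply viaQ 1 one_pos
      have h2 : a*(u+v) = a*v := by rw [← hu]; ring
      rw [h2, one_mul]
      calc Q ≤ s * f (a*v) := hQle
        _ ≤ (t+s) * f (a*v) := by linarith only [mul_pos ht hfav]
    rcases hv0.eq_or_lt with hv | hv
    · -- v = 0
      apply step 1 hC₂1
      apply viaP 1 one_pos
      have h2 : a*(u+v) = a*u := by rw [← hv]; ring
      rw [h2, one_mul]
      have h3 : f (b*u) ≤ f (a*u) := hfdec (a*u) (b*u) (mul_pos ha hu)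
        (by linarith only [mul_pos hba hu])
      have h4 : 0 < f (a*u) := hfub _ (mul_nonneg ha.le hu0)
      calc P ≤ t * f (b*u) := hPle
        _ ≤ (t+s) * f (a*u) := by
          linarith only [mul_le_mul_of_nonneg_left h3 ht.le, mul_pos hs h4]
    rcases le_or_gt (a*v) ((b-a)*u) with hI | hII
    · -- Case I
      apply step 1 hC₂1
      apply viaP 1 one_pos
      rw [one_mul]
      have h3 : f (b*u) ≤ f (a*(u+v)) := by
        apply hfdec (a*(u+v)) (b*u) (mul_pos ha (by linarith only [hu, hv]))
        linarith only [hI]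
      calc P ≤ t * f (b*u) := hPle
        _ ≤ (t+s) * f (a*(u+v)) := by
          linarith only [mul_le_mul_of_nonneg_left h3 ht.le, mul_pos hs hfauv]
    · -- Case II : (b-a)*u < a*v
      have hcond := hCond ((b-a)*u) (a*v) (a*u) (mul_pos hba hu) hII (mul_pos ha hu)
      rw [show (b-a)*u + a*u = b*u by ring, show a*v + a*u = a*(u+v) by ring,
        ← mul_div_assoc] at hcond
      rw [div_le_div_iff₀ hfbau hfav] at hcond
      -- hcond : f (b*u) * f (a*v) ≤ C₆' * f (a*(u+v)) * f ((b-a)*u)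
      rcases le_or_gt (a*u) ((N:ℝ)*r₀) with hSm | hLg
      · -- small a*u : use iterated local comparability
        apply step (Cl^N) hC₂Cl
        apply viaQ (Cl^N) hClN0
        have h4 : f (a*v) ≤ Cl^N * f (a*v + a*u) := by
          apply Fshift' N (a*v) (a*u) (mul_pos ha hv) (mul_pos ha hu).le hSm
          linarith only [mul_le_mul_of_nonneg_right hN2 hu0,
            mul_le_mul_of_nonneg_left hII.le hNpos.le]
        rw [show a*v + a*u = a*(u+v) by ring] at h4
        calc Q ≤ s * f (a*v) := hQle
          _ ≤ s * (Cl^N * f (a*(u+v))) := mul_le_mul_of_nonneg_left h4 hs.le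
          _ ≤ Cl^N * ((t+s) * f (a*(u+v))) := by
              linarith only [mul_pos (mul_pos ht hClN0) hfauv]
      rcases le_or_gt (t * f ((b-a)*u)) A with hXf | hXA
      · -- X = t * f ((b-a)*u) : use condition (C) directly
        apply step C₆' hC₂C6
        have hXeq : X = t * f ((b-a)*u) := by rw [hXdef]; exact min_eq_right hXf
        have h5 : P * Q ≤ (t * f (b*u)) * (s * f (a*v)) :=
          mul_le_mul hPle hQle hQ0.le (mul_pos ht hfbu).le
        have h6 : (t * f (b*u)) * (s * f (a*v)) ≤
            C₆' * ((t * f ((b-a)*u)) * ((t+s) * f (a*(u+v)))) := by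
          have h7 : (t*s) * (f (b*u) * f (a*v)) ≤ (t*s) * (C₆' * f (a*(u+v)) * f ((b-a)*u)) :=
            mul_le_mul_of_nonneg_left hcond (by positivity)
          linarith only [mul_pos (mul_pos (mul_pos ht ht) (mul_pos hfbau hfauv)) hC₆', h7]
        calc P*Q ≤ C₆' * ((t * f ((b-a)*u)) * ((t+s) * f (a*(u+v)))) := h5.trans h6
          _ = C₆' * (X * ((t+s) * f (a*(u+v)))) := by rw [hXeq]
          _ ≤ C₆' * (max X Q * ((t+s) * f (a*(u+v)))) := by
              apply mul_le_mul_of_nonneg_left _ hC₆'.le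
              exact mul_le_mul_of_nonneg_right (le_max_left X Q) (mul_pos hts0 hfauv).le
      · -- hard case
        apply step (C₆'*Cs) hC₂CsC6
        apply viaQ (C₆'*Cs) (mul_pos hC₆' hCs0)
        have hAlb : r₀ ^ (-(d:ℝ)) ≤ A := by
          rw [hAdef, hr₀def]
          exact Real.rpow_le_rpow_of_nonpos (hhpos t ht htt₀) (hhmono t t₀ ht htt₀ le_rfl) hndd
        have hβlt : β < f ((b-a)*u) := by
          have h8 : β ≤ A/t := by
            rw [hβdef]
            exact div_le_div₀ hA0.le hAlb ht htt₀
          have h9 : A/t < f ((b-a)*u) := by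
            rw [div_lt_iff₀ ht]; linarith only [hXA]
          linarith
        have hCs' : f ((b-a)*u) ≤ Cs * f (b*u) := hCstar u hu hLg hβlt
        have h10 : f (a*v) ≤ (C₆'*Cs) * f (a*(u+v)) := by
          have h11 : f (b*u) * f (a*v) ≤ f (b*u) * ((C₆'*Cs) * f (a*(u+v))) := by
            calc f (b*u) * f (a*v) ≤ C₆' * f (a*(u+v)) * f ((b-a)*u) := hcond
              _ ≤ C₆' * f (a*(u+v)) * (Cs * f (b*u)) :=
                mul_le_mul_of_nonneg_left hCs' (mul_pos hC₆' hfauv).le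
              _ = f (b*u) * ((C₆'*Cs) * f (a*(u+v))) := by ring
          exact le_of_mul_le_mul_left h11 hfbu
        calc Q ≤ s * f (a*v) := hQle
          _ ≤ s * ((C₆'*Cs) * f (a*(u+v))) :=
            mul_le_mul_of_nonneg_left h10 hs.le
          _ ≤ (C₆'*Cs) * ((t+s) * f (a*(u+v))) := by
              linarith only [mul_pos (mul_pos ht (mul_pos hC₆' hCs0)) hfauv]
  -- Core part 2 : the Z₁-type bound
  have hminPQ : min P Q ≤ κ₀ * Z₁ := by
    have hhts : 0 < h (t+s) := hhpos _ hts0 hts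
    have h1 : c₀ * h (t+s) ≤ h ((t+s)/2) := hdbl _ hts0 hts
    have hmxAB : min A B ≤ κ₀ * Z₁ := by
      rw [hAdef, hBdef, hκ₀def, hZ₁def]
      rcases le_total t s with hc | hc
      · have h2 : h ((t+s)/2) ≤ h s := hhmono _ s (by linarith) (by linarith) hst₀
        have h4 : (h s) ^ (-(d:ℝ)) ≤ (c₀ * h (t+s)) ^ (-(d:ℝ)) :=
          Real.rpow_le_rpow_of_nonpos (mul_pos hc₀ hhts) (by linarith) hndd
        rw [Real.mul_rpow hc₀.le hhts.le] at h4
        exact (min_le_right _ _).trans h4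
      · have h2 : h ((t+s)/2) ≤ h t := hhmono _ t (by linarith) (by linarith) htt₀
        have h4 : (h t) ^ (-(d:ℝ)) ≤ (c₀ * h (t+s)) ^ (-(d:ℝ)) :=
          Real.rpow_le_rpow_of_nonpos (mul_pos hc₀ hhts) (by linarith) hndd
        rw [Real.mul_rpow hc₀.le hhts.le] at h4
        exact (min_le_left _ _).trans h4
    exact (le_min ((min_le_left P Q).trans hPA) ((min_le_right P Q).trans hQB)).trans hmxAB
  -- combined core inequality
  have CoreZ : P * Q ≤ Ccore * (max X Q * Z) := by
    rcases le_total Z₁ Z₂ with hz | hz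
    · have hZeq : Z = Z₁ := by rw [hZdef]; exact min_eq_left hz
      have h1 : P * Q ≤ max X Q * min P Q := by
        rcases le_total P Q with hpq | hpq
        · calc P*Q = Q*P := by ring
            _ ≤ max X Q * P := mul_le_mul_of_nonneg_right (le_max_right X Q) hP0.le
            _ = max X Q * min P Q := by rw [min_eq_left hpq]
        · calc P*Q ≤ max X Q * Q :=
              mul_le_mul_of_nonneg_right (hPX.trans (le_max_left X Q)) hQ0.le
            _ = max X Q * min P Q := by rw [min_eq_right hpq]
      calc P*Q ≤ max X Q * min P Q := h1
        _ ≤ max X Q * (κ₀ * Z₁) := mul_le_mul_of_nonneg_left hminPQ hmax0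
        _ = κ₀ * (max X Q * Z₁) := by ring
        _ ≤ Ccore * (max X Q * Z) := by
            rw [hZeq]
            exact mul_le_mul_of_nonneg_right hCcoreκ
              (mul_nonneg hmax0 hZ₁0.le)
    · have hZeq : Z = Z₂ := by rw [hZdef]; exact min_eq_right hz
      have hfawle : f (a*(u+v)) ≤ c₁ * f (a*w) := by
        apply hfmono0 (a*w) (a*(u+v)) (mul_nonneg ha.le hw0)
        exact mul_le_mul_of_nonneg_left hwuv ha.le
      calc P*Q ≤ C₂ * (max X Q * ((t+s) * f (a*(u+v)))) := Core2
        _ ≤ C₂ * (max X Q * ((t+s) * (c₁ * f (a*w)))) := by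
            apply mul_le_mul_of_nonneg_left _ hC₂0.le
            apply mul_le_mul_of_nonneg_left _ hmax0
            exact mul_le_mul_of_nonneg_left hfawle hts0.le
        _ = (c₁ * C₂) * (max X Q * Z₂) := by rw [hZ₂def]; ring
        _ ≤ Ccore * (max X Q * Z) := by
            rw [hZeq]
            exact mul_le_mul_of_nonneg_right hCcorec₁
              (mul_nonneg hmax0 hZ₂0.le)
  -- assemble the final inequality
  have hp1pos : 0 < p t (b • x) := lt_of_lt_of_le (mul_pos hC₅ hP0) hp1l
  have hp2pos : 0 < p s (a • y) := lt_of_lt_of_le (mul_pos hC₅ hQ0) hp2l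
  have hp3pos : 0 < p t ((b-a) • x) := lt_of_lt_of_le (mul_pos hC₅ hX0) hp3l
  have hp4pos : 0 < p (t+s) (a • (x+y)) := lt_of_lt_of_le (mul_pos hC₅ hZ0) hp4l
  have hLHS : (b^(d:ℝ) * p t (b • x)) * (a^(d:ℝ) * p s (a • y)) ≤
      (b^(d:ℝ) * a^(d:ℝ) * C₆^2) * (P*Q) := by
    calc (b^(d:ℝ) * p t (b • x)) * (a^(d:ℝ) * p s (a • y))
        ≤ (b^(d:ℝ) * (C₆ * P)) * (a^(d:ℝ) * (C₆ * Q)) := by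
          apply mul_le_mul (mul_le_mul_of_nonneg_left hp1u hbd0.le)
            (mul_le_mul_of_nonneg_left hp2u had0.le)
            (mul_pos had0 hp2pos).le
            (mul_pos hbd0 (mul_pos hC₆ hP0)).le
      _ = (b^(d:ℝ) * a^(d:ℝ) * C₆^2) * (P*Q) := by ring
  have hMAX : C₅ * m₁ * max X Q ≤
      max ((b-a)^(d:ℝ) * p t ((b-a) • x)) (a^(d:ℝ) * p s (a • y)) := by
    have e1 : C₅ * m₁ * X ≤ (b-a)^(d:ℝ) * p t ((b-a) • x) := by
      calc C₅ * m₁ * X ≤ C₅ * ((b-a)^(d:ℝ)) * X := by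
            apply mul_le_mul_of_nonneg_right _ hX0.le
            exact mul_le_mul_of_nonneg_left hm₁l hC₅.le
        _ = (b-a)^(d:ℝ) * (C₅ * X) := by ring
        _ ≤ (b-a)^(d:ℝ) * p t ((b-a) • x) := mul_le_mul_of_nonneg_left hp3l hbad0.le
    have e2 : C₅ * m₁ * Q ≤ a^(d:ℝ) * p s (a • y) := by
      calc C₅ * m₁ * Q ≤ C₅ * (a^(d:ℝ)) * Q := by
            apply mul_le_mul_of_nonneg_right _ hQ0.le
            exact mul_le_mul_of_nonneg_left hm₁r hC₅.le
        _ = a^(d:ℝ) * (C₅ * Q) := by ring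
        _ ≤ a^(d:ℝ) * p s (a • y) := mul_le_mul_of_nonneg_left hp2l had0.le
    rcases le_total X Q with hxq | hxq
    · rw [max_eq_right hxq]
      exact e2.trans (le_max_right _ _)
    · rw [max_eq_left hxq]
      exact e1.trans (le_max_left _ _)
  have hZf : a^(d:ℝ) * (C₅ * Z) ≤ a^(d:ℝ) * p (t+s) (a • (x+y)) :=
    mul_le_mul_of_nonneg_left hp4l had0.le
  set C : ℝ := b ^ (d:ℝ) * C₆^2 * Ccore / (C₅^2 * m₁) with hCdef
  have hC0 : 0 < C := div_pos (mul_pos (mul_pos hbd0 (pow_pos hC₆ 2)) hCcore0)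
      (mul_pos (pow_pos hC₅ 2) hm₁0)
  have hfinal : C * (C₅ * m₁ * max X Q) * (a^(d:ℝ) * (C₅ * Z)) =
      (b^(d:ℝ) * a^(d:ℝ) * C₆^2) * (Ccore * (max X Q * Z)) := by
    rw [hCdef]; field_simp
  calc (b^(d:ℝ) * p t (b • x)) * (a^(d:ℝ) * p s (a • y))
      ≤ (b^(d:ℝ) * a^(d:ℝ) * C₆^2) * (P*Q) := hLHS
    _ ≤ (b^(d:ℝ) * a^(d:ℝ) * C₆^2) * (Ccore * (max X Q * Z)) :=
        mul_le_mul_of_nonneg_left CoreZ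
          (mul_pos (mul_pos hbd0 had0) (pow_pos hC₆ 2)).le
    _ = C * (C₅ * m₁ * max X Q) * (a^(d:ℝ) * (C₅ * Z)) := hfinal.symm
    _ ≤ C * max ((b-a)^(d:ℝ) * p t ((b-a) • x)) (a^(d:ℝ) * p s (a • y)) *
        (a^(d:ℝ) * p (t+s) (a • (x+y))) := by
        apply mul_le_mul
        · exact mul_le_mul_of_nonneg_left hMAX hC0.le
        · exact hZf
        · exact (mul_pos had0 (mul_pos hC₅ hZ0)).le
        · exact mul_nonneg hC0.le
            (le_trans (mul_pos had0 hp2pos).le (le_max_right _ _))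
end
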